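/- Let f : [0,1]^d → ℝ be continuously differentiable, fix i ∈ {1,…,d} and a constant m > 0. Assume the total variance D > 0 and that u_i is not identically zero (equivalently D_i^tot > 0). Then γ(m) := (2m+1)·[∫_{H^d} (f(1,z) − f(x)) dx − w_i^{(m+1)}]² / ((m+1)² D) < S_i^tot (lower bound LB2). -/

import Mathlib

open MeasureTheory Real

noncomputable section

/-- The unit cube `[0,1]^d` in `ℝ^d`. -/
def unitCube (d : ℕ) : Set (Fin d → ℝ) := Set.Icc 0 1

/-- The partial derivative `∂f/∂x_i` at the point `x`. -/
def pderivI {d : ℕ} (f : (Fin d → ℝ) → ℝ) (i : Fin d) (x : Fin d → ℝ) : ℝ :=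
  deriv (fun t : ℝ => f (Function.update x i t)) (x i)

/-- `u_i(x) = f(x) - ∫₀¹ f(x₁,…,x_{i-1},t,x_{i+1},…,x_d) dt`, the sum of all ANOVA
terms of `f` depending on `x_i`. -/
def uComp {d : ℕ} (f : (Fin d → ℝ) → ℝ) (i : Fin d) (x : Fin d → ℝ) : ℝ :=
  f x - ∫ t in (0:ℝ)..1, f (Function.update x i t)

/-- The total variance `D = ∫ f² dx − (∫ f dx)²` over the unit cube. -/
def totVar {d : ℕ} (f : (Fin d → ℝ) → ℝ) : ℝ :=
  (∫ x in unitCube d, (f x) ^ 2) - (∫ x in unitCube d, f x) ^ 2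

/-- The total partial variance `D_i^tot = ∫ u_i² dx`. -/
def DTot {d : ℕ} (f : (Fin d → ℝ) → ℝ) (i : Fin d) : ℝ :=
  ∫ x in unitCube d, (uComp f i x) ^ 2

/-- The total Sobol' sensitivity index `S_i^tot = D_i^tot / D`. -/
def STot {d : ℕ} (f : (Fin d → ℝ) → ℝ) (i : Fin d) : ℝ :=
  DTot f i / totVar f

/-- The DGSM `ν_i = ∫ (∂f/∂x_i)² dx`. -/
def nuDGSM {d : ℕ} (f : (Fin d → ℝ) → ℝ) (i : Fin d) : ℝ :=
  ∫ x in unitCube d, (pderivI f i x) ^ 2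

/-- The DGSM `w_i^{(m)} = ∫ x_i^m (∂f/∂x_i) dx`. -/
def wDGSM {d : ℕ} (f : (Fin d → ℝ) → ℝ) (i : Fin d) (m : ℝ) : ℝ :=
  ∫ x in unitCube d, (x i) ^ m * pderivI f i x

/-- The DGSM `ς_i = (1/2) ∫ x_i (1 - x_i) (∂f/∂x_i)² dx`. -/
def sigmaDGSM {d : ℕ} (f : (Fin d → ℝ) → ℝ) (i : Fin d) : ℝ :=
  (1 / 2) * ∫ x in unitCube d, x i * (1 - x i) * (pderivI f i x) ^ 2

/-! The key identity comes from integrating by parts in `x_i` on each one-dimensional slice: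
`∫ (f(1,z) − f(x)) dx − w_i^{(m+1)} = (m+1) ∫ x_i^m u_i(x) dx`. Since `u_i` has zero mean along
every slice, `x_i^m` may be replaced by its centred version `x_i^m − 1/(m+1)`, whose second moment
is `m² / ((2m+1)(m+1)²)`. Cauchy–Schwarz then gives `γ(m) ≤ (m/(m+1))² S_i^tot`, which is strictly
smaller than `S_i^tot` because `D_i^tot > 0`. -/

theorem Set.preimage_update_univ_pi {ι : Type*} [DecidableEq ι] {α : ι → Type*} (i : ι)
    (s : ∀ j, Set (α j)) :
    (fun p : (∀ j, α j) × α i => Function.update p.1 i p.2) ⁻¹' Set.univ.pi s =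
      Set.univ.pi (Function.update s i Set.univ) ×ˢ s i := by
  rw [Set.univ_pi_update i s Set.univ fun _ t => t]
  ext ⟨x, t⟩
  simp [Function.forall_update_iff, and_comm]

namespace MeasureTheory

section IntegrateOutCoordinate

variable {ι : Type*} [Fintype ι] [DecidableEq ι] {α : ι → Type*} [∀ j, MeasurableSpace (α j)]
  (μ : ∀ j, Measure (α j)) [∀ j, SigmaFinite (μ j)] (i : ι) [IsProbabilityMeasure (μ i)]

theorem Measure.map_update_prod_pi :
    ((Measure.pi μ).prod (μ i)).map (fun p => Function.update p.1 i p.2) = Measure.pi μ := by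
  refine (Measure.pi_eq fun s hs => ?_).symm
  rw [Measure.map_apply (by fun_prop) (.univ_pi hs), Set.preimage_update_univ_pi,
    Measure.prod_prod, Measure.pi_pi,
    Finset.prod_congr rfl fun j _ => Function.apply_update (fun j => μ j) s i Set.univ j,
    Finset.prod_update_of_mem (Finset.mem_univ i), measure_univ, one_mul,
    Finset.sdiff_singleton_eq_erase, Finset.prod_erase_mul _ _ (Finset.mem_univ i)]

theorem integral_integral_update_pi {E : Type*} [NormedAddCommGroup E] [NormedSpace ℝ E]
    {g : (∀ j, α j) → E} (hg : Integrable g (Measure.pi μ)) :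
    ∫ x, ∫ t, g (Function.update x i t) ∂μ i ∂Measure.pi μ = ∫ x, g x ∂Measure.pi μ := by
  have hT : Measurable fun p : (∀ j, α j) × α i => Function.update p.1 i p.2 := by fun_prop
  rw [← Measure.map_update_prod_pi μ i] at hg
  calc ∫ x, ∫ t, g (Function.update x i t) ∂μ i ∂Measure.pi μ
      = ∫ p, g (Function.update p.1 i p.2) ∂(Measure.pi μ).prod (μ i) :=
        (integral_prod _ ((integrable_map_measure hg.1 hT.aemeasurable).1 hg)).symm
    _ = ∫ x, g x ∂((Measure.pi μ).prod (μ i)).map (fun p => Function.update p.1 i p.2) :=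
        (integral_map hT.aemeasurable hg.1).symm
    _ = ∫ x, g x ∂Measure.pi μ := by rw [Measure.map_update_prod_pi]

end IntegrateOutCoordinate

end MeasureTheory

section UnitCube

open Set

instance : IsProbabilityMeasure (volume.restrict (Icc (0 : ℝ) 1)) :=
  ⟨by simp⟩

theorem volume_restrict_unitCube (d : ℕ) :
    volume.restrict (unitCube d) = Measure.pi fun _ : Fin d => volume.restrict (Icc (0 : ℝ) 1) := by
  rw [unitCube, ← pi_univ_Icc, volume_pi, Measure.restrict_pi_pi]
  rfl

variable {d : ℕ}

theorem Continuous.integrableOn_unitCube {g : (Fin d → ℝ) → ℝ} (hg : Continuous g) :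
    IntegrableOn g (unitCube d) :=
  hg.continuousOn.integrableOn_compact isCompact_Icc

theorem integral_unitCube_eq_integral_integral_update {g : (Fin d → ℝ) → ℝ} (hg : Continuous g)
    (i : Fin d) :
    ∫ x in unitCube d, g x = ∫ x in unitCube d, ∫ t in (0 : ℝ)..1, g (Function.update x i t) := by
  have hint := hg.integrableOn_unitCube
  simp_rw [intervalIntegral.integral_of_le zero_le_one, ← integral_Icc_eq_integral_Ioc]
  rw [IntegrableOn, volume_restrict_unitCube] at hint
  rw [volume_restrict_unitCube, integral_integral_update_pi _ i hint]

theorem integral_unitCube_congr_slices {g h : (Fin d → ℝ) → ℝ} (hg : Continuous g)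
    (hh : Continuous h) (i : Fin d)
    (hslice : ∀ x, ∫ t in (0 : ℝ)..1, g (Function.update x i t) =
      ∫ t in (0 : ℝ)..1, h (Function.update x i t)) :
    ∫ x in unitCube d, g x = ∫ x in unitCube d, h x := by
  rw [integral_unitCube_eq_integral_integral_update hg i,
    integral_unitCube_eq_integral_integral_update hh i]
  simp_rw [hslice]

theorem integral_unitCube_const (c : ℝ) : ∫ _ in unitCube d, c = c := by
  simp [volume_restrict_unitCube]

end UnitCube

section UnitInterval

variable {m : ℝ}

theorem integral_rpow_zero_one (hm : -1 < m) : ∫ t in (0 : ℝ)..1, t ^ m = 1 / (m + 1) := by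
  rw [integral_rpow (Or.inl hm), one_rpow, zero_rpow (by linarith)]
  ring

theorem integral_rpow_add_one_mul_deriv {g : ℝ → ℝ} (hg : ContDiff ℝ 1 g) (hm : 0 ≤ m) :
    ∫ t in (0 : ℝ)..1, t ^ (m + 1) * deriv g t =
      g 1 - (m + 1) * ∫ t in (0 : ℝ)..1, t ^ m * g t := by
  have hpow (t : ℝ) : HasDerivAt (fun t : ℝ => t ^ (m + 1)) ((m + 1) * t ^ m) t := by
    simpa using hasDerivAt_rpow_const (x := t) (p := m + 1) (Or.inr (by linarith))
  have hg' (t : ℝ) : HasDerivAt g (deriv g t) t :=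
    ((hg.differentiable one_ne_zero) t).hasDerivAt
  rw [intervalIntegral.integral_mul_deriv_eq_deriv_mul (fun t _ => hpow t) (fun t _ => hg' t)
      ((continuous_const.mul (Real.continuous_rpow_const hm)).intervalIntegrable 0 1)
      (hg.continuous_deriv_one.intervalIntegrable 0 1)]
  simp only [one_rpow, zero_rpow (by linarith : m + 1 ≠ 0), one_mul, zero_mul, sub_zero,
    mul_assoc, intervalIntegral.integral_const_mul]

theorem integral_sub_sub_rpow_mul_deriv {g : ℝ → ℝ} (hg : ContDiff ℝ 1 g) (hm : 0 ≤ m) :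
    ∫ t in (0 : ℝ)..1, (g 1 - g t - t ^ (m + 1) * deriv g t) =
      (m + 1) * ∫ t in (0 : ℝ)..1, t ^ m * (g t - ∫ s in (0 : ℝ)..1, g s) := by
  have hg' := hg.continuous_deriv_one
  have hpow := Real.continuous_rpow_const hm
  have hpow' := Real.continuous_rpow_const (by linarith : 0 ≤ m + 1)
  simp_rw [mul_sub]
  rw [intervalIntegral.integral_sub, intervalIntegral.integral_sub, intervalIntegral.integral_sub,
    integral_rpow_add_one_mul_deriv hg hm, intervalIntegral.integral_mul_const,
    integral_rpow_zero_one (by linarith)]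
  · simp only [intervalIntegral.integral_const, sub_zero, smul_eq_mul, one_mul]
    field_simp
    ring
  all_goals
    exact Continuous.intervalIntegrable (by fun_prop) 0 1

theorem integral_rpow_sub_sq (hm : 0 ≤ m) :
    ∫ t in (0 : ℝ)..1, (t ^ m - 1 / (m + 1)) ^ 2 = m ^ 2 / ((2 * m + 1) * (m + 1) ^ 2) := by
  have hsq : ∀ t ∈ Set.uIcc (0 : ℝ) 1,
      (t ^ m - 1 / (m + 1)) ^ 2 = t ^ (m * 2) - 2 / (m + 1) * t ^ m + (1 / (m + 1)) ^ 2 := by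
    intro t ht
    rw [Set.uIcc_of_le zero_le_one] at ht
    rw [rpow_mul ht.1, rpow_two]
    ring
  have hpow := Real.continuous_rpow_const hm
  have hpow2 := Real.continuous_rpow_const (by linarith : 0 ≤ m * 2)
  rw [intervalIntegral.integral_congr hsq, intervalIntegral.integral_add,
    intervalIntegral.integral_sub, intervalIntegral.integral_const_mul,
    integral_rpow_zero_one (by linarith), integral_rpow_zero_one (by linarith)]
  · simp only [intervalIntegral.integral_const, sub_zero, smul_eq_mul, one_mul]
    field_simp
    ring
  all_goals
    exact Continuous.intervalIntegrable (by fun_prop) 0 1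

end UnitInterval

theorem sq_integral_mul_le_integral_sq_mul_integral_sq {α : Type*} [MeasurableSpace α]
    {μ : Measure α} {φ u : α → ℝ} (hφ : Integrable (fun x => φ x ^ 2) μ)
    (hu : Integrable (fun x => u x ^ 2) μ) (hφu : Integrable (fun x => φ x * u x) μ) :
    (∫ x, φ x * u x ∂μ) ^ 2 ≤ (∫ x, φ x ^ 2 ∂μ) * ∫ x, u x ^ 2 ∂μ := by
  have hquad (a : ℝ) : 0 ≤ (∫ x, φ x ^ 2 ∂μ) * (a * a) + (-2 * ∫ x, φ x * u x ∂μ) * a +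
      ∫ x, u x ^ 2 ∂μ := by
    have hexpand : (fun x => (a * φ x - u x) ^ 2) =
        fun x => a ^ 2 * φ x ^ 2 - 2 * a * (φ x * u x) + u x ^ 2 := by
      ext x; ring
    have hnonneg : 0 ≤ ∫ x, (a * φ x - u x) ^ 2 ∂μ := integral_nonneg fun x => sq_nonneg _
    rw [hexpand, integral_add _ hu, integral_sub (hφ.const_mul _) (hφu.const_mul _),
      integral_const_mul, integral_const_mul] at hnonneg
    · linarith
    · exact (hφ.const_mul _).sub (hφu.const_mul _)
  have := discrim_le_zero hquad
  rw [discrim] at this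
  linarith

section SobolIndices

open Function

variable {d : ℕ} {f : (Fin d → ℝ) → ℝ} (i : Fin d) {m : ℝ}

theorem continuous_apply_rpow_const {p : ℝ} (hp : 0 ≤ p) :
    Continuous fun x : Fin d → ℝ => x i ^ p :=
  (continuous_apply i).rpow_const fun _ => Or.inr hp

theorem pderivI_update (x : Fin d → ℝ) (t : ℝ) :
    pderivI f i (update x i t) = deriv (fun s => f (update x i s)) t := by
  simp [pderivI]

theorem uComp_update (x : Fin d → ℝ) (t : ℝ) :
    uComp f i (update x i t) = f (update x i t) - ∫ s in (0 : ℝ)..1, f (update x i s) := by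
  simp [uComp]

theorem pderivI_eq_fderiv (hf : Differentiable ℝ f) (x : Fin d → ℝ) :
    pderivI f i x = fderiv ℝ f x (Pi.single i 1) := by
  have h := (hf _).hasFDerivAt.comp_hasDerivAt (x i) (hasDerivAt_update x i (x i))
  rw [update_eq_self] at h
  exact h.deriv

theorem continuous_pderivI (hf : ContDiff ℝ 1 f) : Continuous (pderivI f i) := by
  rw [funext (pderivI_eq_fderiv i (hf.differentiable one_ne_zero))]
  exact (hf.continuous_fderiv one_ne_zero).clm_apply continuous_const

theorem continuous_uComp (hf : Continuous f) : Continuous (uComp f i) :=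
  hf.sub <| intervalIntegral.continuous_parametric_intervalIntegral_of_continuous'
    (f := fun x t => f (update x i t)) (hf.comp (continuous_fst.update i continuous_snd)) 0 1

theorem integral_uComp (hf : Continuous f) : ∫ x in unitCube d, uComp f i x = 0 := by
  rw [integral_unitCube_congr_slices (h := fun _ => 0) (continuous_uComp i hf) continuous_const i,
    integral_zero]
  intro x
  have hslice : Continuous fun t => f (update x i t) :=
    hf.comp (continuous_const.update i continuous_id)
  simp only [uComp_update, intervalIntegral.integral_zero]
  rw [intervalIntegral.integral_sub (hslice.intervalIntegrable 0 1) intervalIntegrable_const]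
  simp

theorem integral_sub_sub_wDGSM (hf : ContDiff ℝ 1 f) (hm : 0 ≤ m) :
    (∫ x in unitCube d, (f (update x i 1) - f x)) - wDGSM f i (m + 1) =
      (m + 1) * ∫ x in unitCube d, x i ^ m * uComp f i x := by
  have hboundary : Continuous fun x : Fin d → ℝ => f (update x i 1) - f x :=
    (hf.continuous.comp (continuous_id.update i continuous_const)).sub hf.continuous
  have hweighted : Continuous fun x : Fin d → ℝ => x i ^ (m + 1) * pderivI f i x :=
    (continuous_apply_rpow_const i (by linarith)).mul (continuous_pderivI i hf)
  have hslices := integral_unitCube_congr_slices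
    (g := fun x => f (update x i 1) - f x - x i ^ (m + 1) * pderivI f i x)
    (h := fun x => (m + 1) * (x i ^ m * uComp f i x)) (hboundary.sub hweighted)
    (continuous_const.mul ((continuous_apply_rpow_const i hm).mul
      (continuous_uComp i hf.continuous))) i fun x => by
      simpa only [pderivI_update, uComp_update, update_idem, update_self,
        intervalIntegral.integral_const_mul] using
        integral_sub_sub_rpow_mul_deriv (g := fun t => f (update x i t))
          (hf.comp (contDiff_update 1 x i)) hm
  rwa [integral_sub hboundary.integrableOn_unitCube hweighted.integrableOn_unitCube,
    integral_const_mul] at hslices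

theorem sq_integral_rpow_mul_uComp_le (hf : Continuous f) (hm : 0 ≤ m) :
    (∫ x in unitCube d, x i ^ m * uComp f i x) ^ 2 ≤
      m ^ 2 / ((2 * m + 1) * (m + 1) ^ 2) * DTot f i := by
  have hpow := continuous_apply_rpow_const i hm
  have hu := continuous_uComp i hf
  set φ : (Fin d → ℝ) → ℝ := fun x => x i ^ m - 1 / (m + 1)
  have hφ : Continuous φ := hpow.sub continuous_const
  have hcentre :
      ∫ x in unitCube d, x i ^ m * uComp f i x = ∫ x in unitCube d, φ x * uComp f i x := by
    simp_rw [φ, sub_mul]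
    rw [integral_sub, integral_const_mul, integral_uComp i hf, mul_zero, sub_zero]
    · exact (hpow.mul hu).integrableOn_unitCube
    · exact (continuous_const.mul hu).integrableOn_unitCube
  have hvar : ∫ x in unitCube d, φ x ^ 2 = m ^ 2 / ((2 * m + 1) * (m + 1) ^ 2) := by
    rw [integral_unitCube_congr_slices (g := fun x => φ x ^ 2)
      (h := fun _ => m ^ 2 / ((2 * m + 1) * (m + 1) ^ 2)) (hφ.pow 2) continuous_const i,
      integral_unitCube_const]
    intro x
    simpa [φ] using integral_rpow_sub_sq hm
  rw [hcentre, ← hvar, DTot]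
  exact sq_integral_mul_le_integral_sq_mul_integral_sq (hφ.pow 2).integrableOn_unitCube
    (hu.pow 2).integrableOn_unitCube (hφ.mul hu).integrableOn_unitCube

end SobolIndices

/-- **Theorem 3 (lower bound LB2).** For `f` continuously differentiable on the unit cube,
`m > 0`, `D > 0` and `u_i` not identically zero (i.e. `D_i^tot > 0`), the quantity
`γ(m) = (2m+1)·[∫ (f(1,z) − f(x)) dx − w_i^{(m+1)}]² / ((m+1)² D)` is a strict lower bound
on `S_i^tot`. -/
theorem dgsm_lower_bound_LB2 (d : ℕ) (f : (Fin d → ℝ) → ℝ) (hf : ContDiff ℝ 1 f)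
    (i : Fin d) (m : ℝ) (hm : 0 < m) (hD : 0 < totVar f) (hui : 0 < DTot f i) :
    (2 * m + 1) *
        ((∫ x in unitCube d, (f (Function.update x i 1) - f x)) - wDGSM f i (m + 1)) ^ 2 /
      ((m + 1) ^ 2 * totVar f) < STot f i := by
  have hQ := sq_integral_rpow_mul_uComp_le i hf.continuous hm.le
  rw [integral_sub_sub_wDGSM i hf hm.le, STot]
  set Q := ∫ x in unitCube d, x i ^ m * uComp f i x
  have hcoef : (m / (m + 1)) ^ 2 < 1 := by
    rw [div_pow, div_lt_one (by positivity)]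
    nlinarith
  calc (2 * m + 1) * ((m + 1) * Q) ^ 2 / ((m + 1) ^ 2 * totVar f)
      = (2 * m + 1) * Q ^ 2 / totVar f := by field_simp
    _ ≤ (m / (m + 1)) ^ 2 * DTot f i / totVar f := by
        refine div_le_div_of_nonneg_right ?_ hD.le
        calc (2 * m + 1) * Q ^ 2
            ≤ (2 * m + 1) * (m ^ 2 / ((2 * m + 1) * (m + 1) ^ 2) * DTot f i) := by gcongr
          _ = (m / (m + 1)) ^ 2 * DTot f i := by field_simp
    _ < DTot f i / totVar f := by gcongr; exact mul_lt_of_lt_one_left hui hcoef
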